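/- arXiv:2301.10060 — 2 statements merged into one kernel-verified Lean document; each statement's English description precedes it below -/
import Mathlib

section
/- Let n be a natural number, let J be a real n×n skew-symmetric matrix, R a real n×n positive semidefinite matrix, Q a real n×n positive definite matrix, and set A = (J − R)Q. Let x : ℝ → ℝⁿ satisfy x' (t) = A x(t) at every t ∈ ℝ. Then x(t)ᵀQ x(t) ≤ x(0)ᵀQ x(0) for all t ≥ 0, and there exists a constant C ≥ 0 such that ‖x(t)‖ ≤ C for all t ≥ 0 (global boundedness of the solution on [0, ∞)). -/
/-!
`V(x) = xᵀ Q x` is a Lyapunov function for `x' = (J - R) Q x`: along a solution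
`V' = 2 (Q x)ᵀ (J - R) (Q x) = -2 (Q x)ᵀ R (Q x) ≤ 0`, the skew-symmetric part contributing
nothing, so `V` is antitone. Positive definiteness gives `c > 0` (the minimum of `V` on the
compact unit sphere) with `c ‖v‖² ≤ V(v)`, hence `‖x(t)‖² ≤ V(x(0)) / c` for `t ≥ 0`.
-/

open Matrix

theorem exists_pos_mul_norm_sq_le {E : Type*} [NormedAddCommGroup E] [NormedSpace ℝ E]
    [FiniteDimensional ℝ E] {q : E → ℝ} (hq : Continuous q)
    (hsmul : ∀ (c : ℝ) (v : E), q (c • v) = c ^ 2 * q v) (hpos : ∀ v, v ≠ 0 → 0 < q v) :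
    ∃ c, 0 < c ∧ ∀ v, c * ‖v‖ ^ 2 ≤ q v := by
  have hq0 : q 0 = 0 := by simpa using hsmul 0 0
  cases subsingleton_or_nontrivial E
  · exact ⟨1, one_pos, fun v => by simp [Subsingleton.elim v 0, hq0]⟩
  obtain ⟨w, hw, hmin⟩ := (isCompact_sphere (0 : E) 1).exists_isMinOn
    (NormedSpace.sphere_nonempty.mpr zero_le_one) hq.continuousOn
  refine ⟨q w, hpos w (ne_zero_of_mem_unit_sphere ⟨w, hw⟩), fun v => ?_⟩
  rcases eq_or_ne v 0 with rfl | hv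
  · simp [hq0]
  have hv' : ‖v‖ ≠ 0 := norm_ne_zero_iff.mpr hv
  calc q w * ‖v‖ ^ 2 ≤ q (‖v‖⁻¹ • v) * ‖v‖ ^ 2 := by
        gcongr
        exact hmin (by simp [norm_smul, hv'])
    _ = q v := by rw [hsmul]; field_simp

namespace Matrix

variable {ι : Type*} [Fintype ι]

theorem exists_pos_mul_norm_sq_le_dotProduct_mulVec {Q : Matrix ι ι ℝ}
    (hQ : ∀ v : ι → ℝ, v ≠ 0 → 0 < v ⬝ᵥ (Q *ᵥ v)) :
    ∃ c, 0 < c ∧ ∀ v : ι → ℝ, c * ‖WithLp.toLp 2 v‖ ^ 2 ≤ v ⬝ᵥ (Q *ᵥ v) := by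
  obtain ⟨c, hc, hle⟩ := exists_pos_mul_norm_sq_le
    (q := fun v : EuclideanSpace ℝ ι => v.ofLp ⬝ᵥ (Q *ᵥ v.ofLp)) (by fun_prop)
    (fun c v => by simp only [WithLp.ofLp_smul, mulVec_smul, smul_dotProduct, dotProduct_smul,
      smul_eq_mul]; ring)
    (fun v hv => hQ _ (by simpa using hv))
  exact ⟨c, hc, fun v => hle (WithLp.toLp 2 v)⟩

theorem dotProduct_mulVec_eq_dotProduct_transpose_mulVec {R : Type*} [CommSemiring R]
    (M : Matrix ι ι R) (v w : ι → R) : v ⬝ᵥ (M *ᵥ w) = w ⬝ᵥ (Mᵀ *ᵥ v) := by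
  rw [mulVec_transpose, dotProduct_mulVec, dotProduct_comm]

theorem dotProduct_mulVec_self_eq_zero_of_transpose_eq_neg {J : Matrix ι ι ℝ} (hJ : Jᵀ = -J)
    (v : ι → ℝ) : v ⬝ᵥ (J *ᵥ v) = 0 := by
  have h := dotProduct_mulVec_eq_dotProduct_transpose_mulVec J v v
  rw [hJ, neg_mulVec, dotProduct_neg] at h
  linarith

theorem dotProduct_sub_mulVec_self_nonpos {J R : Matrix ι ι ℝ} (hJ : Jᵀ = -J)
    (hR : ∀ v : ι → ℝ, 0 ≤ v ⬝ᵥ (R *ᵥ v)) (v : ι → ℝ) : v ⬝ᵥ ((J - R) *ᵥ v) ≤ 0 := by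
  rw [sub_mulVec, dotProduct_sub, dotProduct_mulVec_self_eq_zero_of_transpose_eq_neg hJ]
  linarith [hR v]

end Matrix

section Derivatives

variable {ι 𝕜 : Type*} [Fintype ι] [NontriviallyNormedField 𝕜] {f g : 𝕜 → ι → 𝕜}
  {f' g' : ι → 𝕜} {t : 𝕜}

theorem HasDerivAt.dotProduct (hf : HasDerivAt f f' t) (hg : HasDerivAt g g' t) :
    HasDerivAt (fun s => f s ⬝ᵥ g s) (f' ⬝ᵥ g t + f t ⬝ᵥ g') t := by
  simp only [_root_.dotProduct, ← Finset.sum_add_distrib]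
  exact HasDerivAt.fun_sum fun i _ => (hasDerivAt_pi.1 hf i).mul (hasDerivAt_pi.1 hg i)

theorem HasDerivAt.matrix_mulVec (Q : Matrix ι ι 𝕜) (hf : HasDerivAt f f' t) :
    HasDerivAt (fun s => Q *ᵥ f s) (Q *ᵥ f') t :=
  hasDerivAt_pi.2 fun i => by
    have h := (hasDerivAt_const t (Q i)).dotProduct hf
    rwa [zero_dotProduct, zero_add] at h

theorem HasDerivAt.dotProduct_mulVec_self {Q : Matrix ι ι 𝕜} (hQ : Q.IsSymm)
    (hf : HasDerivAt f f' t) :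
    HasDerivAt (fun s => f s ⬝ᵥ (Q *ᵥ f s)) (2 * (f' ⬝ᵥ (Q *ᵥ f t))) t := by
  convert hf.dotProduct (hf.matrix_mulVec Q) using 1
  rw [Matrix.dotProduct_mulVec_eq_dotProduct_transpose_mulVec Q (f t), hQ.eq]
  ring

end Derivatives

theorem solution_bounded_general (n : ℕ) (J R Q A : Matrix (Fin n) (Fin n) ℝ)
    (hJ : Jᵀ = -J)
    (hRpsd : ∀ v : Fin n → ℝ, 0 ≤ v ⬝ᵥ (R *ᵥ v))
    (hQsym : Qᵀ = Q) (hQpd : ∀ v : Fin n → ℝ, v ≠ 0 → 0 < v ⬝ᵥ (Q *ᵥ v))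
    (hA : A = (J - R) * Q)
    (x : ℝ → (Fin n → ℝ))
    (hx : ∀ t : ℝ, HasDerivAt x (A *ᵥ x t) t) :
    (∀ t : ℝ, 0 ≤ t → x t ⬝ᵥ (Q *ᵥ x t) ≤ x 0 ⬝ᵥ (Q *ᵥ x 0)) ∧
    ∃ C : ℝ, 0 ≤ C ∧ ∀ t : ℝ, 0 ≤ t →
      ‖(WithLp.equiv 2 (Fin n → ℝ)).symm (x t)‖ ≤ C := by
  set V : ℝ → ℝ := fun s => x s ⬝ᵥ (Q *ᵥ x s)
  have hV : ∀ t, HasDerivAt V (2 * ((Q *ᵥ x t) ⬝ᵥ ((J - R) *ᵥ (Q *ᵥ x t)))) t := fun t => by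
    have h := (hx t).dotProduct_mulVec_self hQsym
    rwa [hA, ← mulVec_mulVec, dotProduct_comm] at h
  have hV_anti : Antitone V := antitone_of_hasDerivAt_nonpos hV fun t =>
    mul_nonpos_of_nonneg_of_nonpos zero_le_two (dotProduct_sub_mulVec_self_nonpos hJ hRpsd _)
  obtain ⟨c, hc, hcoer⟩ := exists_pos_mul_norm_sq_le_dotProduct_mulVec hQpd
  refine ⟨fun t ht => hV_anti ht, √(V 0 / c), Real.sqrt_nonneg _, fun t ht => ?_⟩
  rw [WithLp.equiv_symm_apply]
  exact Real.le_sqrt_of_sq_le ((le_div_iff₀' hc).2 ((hcoer (x t)).trans (hV_anti ht)))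

/-- For `A = (J - R) Q` with `J` skew-symmetric, `R` positive semidefinite and
`Q` positive definite, any global solution of `x' = A x` satisfies
`x(t)ᵀ Q x(t) ≤ x(0)ᵀ Q x(0)` for `t ≥ 0` and is bounded (in the Euclidean norm)
on `[0, ∞)`. -/
theorem solution_bounded (n : ℕ) (J R Q A : Matrix (Fin n) (Fin n) ℝ)
    (hJ : Jᵀ = -J)
    (hRsym : Rᵀ = R) (hRpsd : ∀ v : Fin n → ℝ, 0 ≤ v ⬝ᵥ (R *ᵥ v))
    (hQsym : Qᵀ = Q) (hQpd : ∀ v : Fin n → ℝ, v ≠ 0 → 0 < v ⬝ᵥ (Q *ᵥ v))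
    (hA : A = (J - R) * Q)
    (x : ℝ → (Fin n → ℝ))
    (hx : ∀ t : ℝ, HasDerivAt x (A *ᵥ x t) t) :
    (∀ t : ℝ, 0 ≤ t → x t ⬝ᵥ (Q *ᵥ x t) ≤ x 0 ⬝ᵥ (Q *ᵥ x 0)) ∧
    ∃ C : ℝ, 0 ≤ C ∧ ∀ t : ℝ, 0 ≤ t →
      ‖(WithLp.equiv 2 (Fin n → ℝ)).symm (x t)‖ ≤ C :=
  solution_bounded_general n J R Q A hJ hRpsd hQsym hQpd hA x hx
end

section
/- Let n be a natural number. A real n×n matrix A has all of its eigenvalues with strictly negative real part (A is Hurwitz) if and only if there exist real n×n matrices J, R, Q with J skew-symmetric, R positive definite, Q positive definite, and A = (J − R)Q. -/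
/-!
If `A = (J - R) Q` and `A x = μ x`, put `y = Q x`; then `μ (x* Q x) = y* J y - y* R y`, where
`x* Q x > 0` and `y* J y` is purely imaginary, so `Re μ < 0`.

Conversely, let `A` be Hurwitz. Its Cayley transform `B = (1 + A)(1 - A)⁻¹` has spectrum in the
open unit disc, so by Gelfand's formula `P = ∑ₖ (Bᵀ)ᵏ Bᵏ` converges; it is positive definite and
solves the Stein equation `BᵀPB = P - 1`, which after multiplying by `1 - A` on both sides becomes
the Lyapunov inequality `2 (AᵀP + PA) = -(1 - A)ᵀ(1 - A) < 0`. Hence `K = A P⁻¹` has negative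
definite symmetric part (it is congruent to `AᵀP + PA`), and `A = (J - R) P` where `J` and `-R`
are the skew-symmetric and symmetric parts of `K`.
-/

open Matrix Filter
open scoped ComplexOrder

theorem Complex.re_sub_one_div_add_one_lt_zero_iff (z : ℂ) :
    ((z - 1) / (z + 1)).re < 0 ↔ ‖z‖ < 1 := by
  have hre : ((z - 1) / (z + 1)).re = (normSq z - 1) / normSq (z + 1) := by
    rw [div_re]
    simp only [normSq_apply, sub_re, sub_im, add_re, add_im, one_re, one_im]
    ring
  rw [hre, ← sq_lt_one_iff₀ (norm_nonneg z), Complex.sq_norm]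
  rcases eq_or_ne z (-1) with rfl | hz
  · norm_num
  · rw [div_lt_iff₀ (normSq_pos.2 fun h => hz (eq_neg_of_add_eq_zero_left h)), zero_mul, sub_neg]

/-- `b` is the Cayley transform `(1 + a)(1 - a)⁻¹`, written so as not to need inverses. -/
theorem spectrum.sub_one_div_add_one_mem_of_cayley {K A : Type*} [Field K] [NeZero (2 : K)] [Ring A]
    [Algebra K A] {a b : A} (ha : IsUnit (1 - a)) (hb : b * (1 - a) = 1 + a) {z : K}
    (hz : z ∈ spectrum K b) : (z - 1) / (z + 1) ∈ spectrum K a := by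
  have hprod : (algebraMap K A z - b) * (1 - a) =
      algebraMap K A (z - 1) - algebraMap K A (z + 1) * a := by
    rw [sub_mul, hb, map_sub, map_add, map_one, mul_sub, mul_one, add_mul, one_mul,
      Algebra.commutes]
    abel
  rw [spectrum.mem_iff, ← ha.mul_right_iff, hprod] at hz
  rcases eq_or_ne (z + 1) 0 with hz1 | hz1
  · refine absurd ?_ hz
    rw [hz1, map_zero, zero_mul, sub_zero, show z - 1 = -2 by linear_combination hz1]
    exact (isUnit_iff_ne_zero.2 (neg_ne_zero.2 two_ne_zero)).map _
  · rw [spectrum.mem_iff]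
    contrapose! hz
    have : algebraMap K A (z - 1) - algebraMap K A (z + 1) * a =
        algebraMap K A (z + 1) * (algebraMap K A ((z - 1) / (z + 1)) - a) := by
      rw [mul_sub, ← map_mul, mul_div_cancel₀ _ hz1]
    rw [this]
    exact ((isUnit_iff_ne_zero.2 hz1).map _).mul hz

theorem spectrum.isUnit_one_sub_of_forall_re_lt_zero {A : Type*} [Ring A] [Algebra ℂ A] {a : A}
    (ha : ∀ μ ∈ spectrum ℂ a, μ.re < 0) : IsUnit (1 - a) := by
  simpa using spectrum.notMem_iff.1 fun h => (ha 1 h).not_ge zero_le_one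

theorem spectrum.norm_lt_one_of_cayley {A : Type*} [Ring A] [Algebra ℂ A] {a b : A}
    (ha : ∀ μ ∈ spectrum ℂ a, μ.re < 0) (hb : b * (1 - a) = 1 + a) :
    ∀ z ∈ spectrum ℂ b, ‖z‖ < 1 := by
  intro z hz
  rw [← Complex.re_sub_one_div_add_one_lt_zero_iff]
  exact ha _ (sub_one_div_add_one_mem_of_cayley (isUnit_one_sub_of_forall_re_lt_zero ha) hb hz)

theorem summable_norm_pow_of_forall_mem_spectrum_norm_lt_one {A : Type*} [NormedRing A]
    [NormedAlgebra ℂ A] [CompleteSpace A] {a : A} (ha : ∀ z ∈ spectrum ℂ a, ‖z‖ < 1) :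
    Summable fun k => ‖a ^ k‖ := by
  cases subsingleton_or_nontrivial A
  · simp [Subsingleton.elim _ (0 : A), summable_zero]
  have hρ : spectralRadius ℂ a < 1 := by
    simpa using spectrum.spectralRadius_lt_of_forall_lt a (r := 1) fun z hz => ha z hz
  obtain ⟨c, hρc, hc1⟩ := ENNReal.lt_iff_exists_nnreal_btwn.1 hρ
  refine .of_norm_bounded_eventually_nat
    (summable_geometric_of_lt_one c.2 (by exact_mod_cast hc1)) ?_
  filter_upwards [(spectrum.pow_norm_pow_one_div_tendsto_nhds_spectralRadius a).eventually
    (gt_mem_nhds hρc), eventually_ne_atTop 0] with k hk hk0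
  rw [ENNReal.ofReal_lt_iff_lt_toReal (by positivity) ENNReal.coe_ne_top,
    ENNReal.coe_toReal] at hk
  calc ‖‖a ^ k‖‖ = (‖a ^ k‖ ^ (1 / k : ℝ)) ^ k := by
        rw [norm_norm, one_div, Real.rpow_inv_natCast_pow (norm_nonneg _) hk0]
    _ ≤ c ^ k := pow_le_pow_left₀ (by positivity) hk.le k

namespace Matrix

variable {n : Type*}

theorem conjTranspose_map_ofReal (M : Matrix n n ℝ) :
    (M.map ((↑) : ℝ → ℂ))ᴴ = Mᵀ.map ((↑) : ℝ → ℂ) := by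
  rw [← conjTranspose_map _ fun x => (Complex.conj_ofReal x).symm,
    conjTranspose_eq_transpose_of_trivial]

variable [Fintype n]

theorem map_ofReal_mul (M N : Matrix n n ℝ) :
    (M * N).map ((↑) : ℝ → ℂ) = M.map (↑) * N.map (↑) :=
  Matrix.map_mul (f := Complex.ofRealHom)

theorem posDef_iff_transpose_eq_self_and_dotProduct_mulVec_pos {R : Matrix n n ℝ} :
    R.PosDef ↔ Rᵀ = R ∧ ∀ v : n → ℝ, v ≠ 0 → 0 < v ⬝ᵥ (R *ᵥ v) := by
  simp [posDef_iff_dotProduct_mulVec, IsHermitian, conjTranspose_eq_transpose_of_trivial]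

theorem re_star_dotProduct_map_ofReal_mulVec (S : Matrix n n ℝ) (x : n → ℂ) :
    (star x ⬝ᵥ (S.map ((↑) : ℝ → ℂ) *ᵥ x)).re =
      (fun i => (x i).re) ⬝ᵥ (S *ᵥ fun i => (x i).re) +
        (fun i => (x i).im) ⬝ᵥ (S *ᵥ fun i => (x i).im) := by
  simp only [dotProduct, mulVec, map_apply, Pi.star_apply, Complex.star_def, Finset.mul_sum,
    Complex.re_sum, ← Finset.sum_add_distrib]
  refine Finset.sum_congr rfl fun i _ => Finset.sum_congr rfl fun j _ => ?_
  simp only [Complex.mul_re, Complex.conj_re, Complex.conj_im, Complex.ofReal_re,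
    Complex.ofReal_im, Complex.mul_im]
  ring

theorem PosDef.map_ofReal {R : Matrix n n ℝ} (hR : R.PosDef) :
    (R.map ((↑) : ℝ → ℂ)).PosDef := by
  have hherm : (R.map ((↑) : ℝ → ℂ)).IsHermitian := by
    rw [IsHermitian, conjTranspose_map_ofReal, ← conjTranspose_eq_transpose_of_trivial,
      hR.isHermitian.eq]
  refine posDef_iff_dotProduct_mulVec.2 ⟨hherm, fun x hx =>
    RCLike.pos_iff.2 ⟨?_, hherm.im_star_dotProduct_mulVec_self x⟩⟩
  have hpos {v : n → ℝ} (hv : v ≠ 0) : 0 < v ⬝ᵥ (R *ᵥ v) := by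
    simpa using hR.dotProduct_mulVec_pos hv
  have hnonneg (v : n → ℝ) : 0 ≤ v ⬝ᵥ (R *ᵥ v) := by
    simpa using hR.posSemidef.dotProduct_mulVec_nonneg v
  rw [RCLike.re_to_complex, re_star_dotProduct_map_ofReal_mulVec]
  by_cases hre : (fun i => (x i).re) = 0
  · have him : (fun i => (x i).im) ≠ 0 := fun him => hx <| funext fun i =>
      Complex.ext (congrFun hre i) (congrFun him i)
    exact add_pos_of_nonneg_of_pos (hnonneg _) (hpos him)
  · exact add_pos_of_pos_of_nonneg (hpos hre) (hnonneg _)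

theorem re_star_dotProduct_mulVec_self_eq_zero {𝕜 : Type*} [RCLike 𝕜] {J : Matrix n n 𝕜}
    (hJ : Jᴴ = -J) (y : n → 𝕜) : RCLike.re (star y ⬝ᵥ (J *ᵥ y)) = 0 := by
  have h : star (star y ⬝ᵥ (J *ᵥ y)) = -(star y ⬝ᵥ (J *ᵥ y)) := by
    rw [← star_dotProduct_star, star_star, star_mulVec, ← dotProduct_mulVec, hJ, neg_mulVec,
      dotProduct_neg]
  have := congrArg RCLike.re h
  rw [RCLike.star_def, RCLike.conj_re, map_neg] at this
  linarith

theorem isClosed_setOf_posSemidef {𝕜 : Type*} [RCLike 𝕜] :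
    IsClosed {M : Matrix n n 𝕜 | M.PosSemidef} := by
  simp only [posSemidef_iff_dotProduct_mulVec, Set.ofPred_and, Set.ofPred_forall]
  refine .inter (isClosed_eq (by fun_prop) continuous_id) (isClosed_iInter fun x => ?_)
  exact isClosed_le continuous_const (by fun_prop)

theorem PosSemidef.hasSum {𝕜 ι : Type*} [RCLike 𝕜] {f : ι → Matrix n n 𝕜} {P : Matrix n n 𝕜}
    (hP : HasSum f P) (hf : ∀ i, (f i).PosSemidef) : P.PosSemidef :=
  isClosed_setOf_posSemidef.mem_of_tendsto hP
    (.of_forall fun s => posSemidef_sum s fun i _ => hf i)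

variable [DecidableEq n]

theorem exists_mulVec_eq_smul_of_mem_spectrum {K : Type*} [Field K] {A : Matrix n n K} {μ : K}
    (hμ : μ ∈ spectrum K A) : ∃ v ≠ 0, A *ᵥ v = μ • v := by
  rw [spectrum.mem_iff, isUnit_iff_isUnit_det, isUnit_iff_ne_zero, not_not,
    ← exists_mulVec_eq_zero_iff] at hμ
  obtain ⟨v, hv, hμv⟩ := hμ
  refine ⟨v, hv, ?_⟩
  rw [sub_mulVec, algebraMap_eq_diagonal, Pi.algebraMap_def, Algebra.algebraMap_self_apply,
    ← smul_one_eq_diagonal, smul_mulVec, one_mulVec, sub_eq_zero] at hμv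
  exact hμv.symm

theorem re_lt_zero_of_mem_spectrum_skew_sub_posDef_mul {𝕜 : Type*} [RCLike 𝕜]
    {J R Q : Matrix n n 𝕜} (hJ : Jᴴ = -J) (hR : R.PosDef) (hQ : Q.PosDef) {μ : 𝕜}
    (hμ : μ ∈ spectrum 𝕜 ((J - R) * Q)) : RCLike.re μ < 0 := by
  obtain ⟨x, hx, hμx⟩ := exists_mulVec_eq_smul_of_mem_spectrum hμ
  set y := Q *ᵥ x
  have hy : y ≠ 0 := fun h => hx <| (mulVec_injective_iff_isUnit.2 hQ.isUnit) (by simpa using h)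
  have key : star y ⬝ᵥ (J *ᵥ y) - star y ⬝ᵥ (R *ᵥ y) = μ * (star x ⬝ᵥ (Q *ᵥ x)) := by
    rw [← dotProduct_sub, ← sub_mulVec, mulVec_mulVec, hμx, dotProduct_smul, smul_eq_mul,
      star_mulVec, ← dotProduct_mulVec, hQ.isHermitian.eq]
  obtain ⟨hRy, -⟩ := RCLike.pos_iff.1 (hR.dotProduct_mulVec_pos hy)
  obtain ⟨hQx, hQx'⟩ := RCLike.pos_iff.1 (hQ.dotProduct_mulVec_pos hx)
  have := congrArg RCLike.re key
  rw [map_sub, re_star_dotProduct_mulVec_self_eq_zero hJ, RCLike.mul_re, hQx', mul_zero,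
    sub_zero] at this
  nlinarith

theorem isUnit_map_iff {K L : Type*} [Field K] [CommRing L] [Nontrivial L] (f : K →+* L)
    (M : Matrix n n K) : IsUnit (M.map f) ↔ IsUnit M := by
  rw [isUnit_iff_isUnit_det, isUnit_iff_isUnit_det, ← RingHom.mapMatrix_apply, ← RingHom.map_det,
    _root_.isUnit_map_iff]

theorem exists_posDef_stein_of_summable {B : Matrix n n ℝ}
    (hB : Summable fun k => (B ^ k)ᵀ * B ^ k) :
    ∃ P : Matrix n n ℝ, P.PosDef ∧ Bᵀ * P * B = P - 1 := by
  obtain ⟨P, hsum⟩ := hB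
  have hStein : P = 1 + Bᵀ * P * B := calc
    P = ∑' k, (B ^ k)ᵀ * B ^ k := hsum.tsum_eq.symm
    _ = (B ^ 0)ᵀ * B ^ 0 + ∑' k, (B ^ (k + 1))ᵀ * B ^ (k + 1) := hsum.summable.tsum_eq_zero_add
    _ = 1 + ∑' k, Bᵀ * ((B ^ k)ᵀ * B ^ k) * B := by
      simp only [pow_zero, transpose_one, mul_one, pow_succ, transpose_mul, Matrix.mul_assoc]
    _ = 1 + Bᵀ * P * B := by rw [((hsum.mul_left Bᵀ).mul_right B).tsum_eq]
  have hP : P.PosSemidef := PosSemidef.hasSum hsum fun k => by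
    simpa [conjTranspose_eq_transpose_of_trivial] using posSemidef_conjTranspose_mul_self (B ^ k)
  refine ⟨P, ?_, by rw [eq_sub_iff_add_eq, add_comm, ← hStein]⟩
  rw [hStein]
  exact PosDef.one.add_posSemidef (by
    simpa [conjTranspose_eq_transpose_of_trivial] using hP.conjTranspose_mul_mul_same B)

section Frobenius

attribute [local instance] frobeniusNormedRing frobeniusNormedAlgebra

theorem summable_transpose_pow_mul_pow_of_forall_norm_lt_one {B : Matrix n n ℝ}
    (hB : ∀ z ∈ spectrum ℂ (B.map ((↑) : ℝ → ℂ)), ‖z‖ < 1) :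
    Summable fun k => (B ^ k)ᵀ * B ^ k := by
  have : CompleteSpace (Matrix n n ℂ) := FiniteDimensional.complete ℂ _
  have hs : Summable fun k => ‖B ^ k‖ := by
    convert summable_norm_pow_of_forall_mem_spectrum_norm_lt_one hB using 2 with k
    rw [← frobenius_norm_map_eq _ _ Complex.norm_real]
    exact congrArg norm (map_pow (Complex.ofRealHom.mapMatrix : Matrix n n ℝ →+* _) B k)
  refine .of_norm_bounded_eventually_nat hs ?_
  filter_upwards [hs.tendsto_atTop_zero.eventually (ge_mem_nhds zero_lt_one)] with k hk
  calc ‖(B ^ k)ᵀ * B ^ k‖ ≤ ‖B ^ k‖ * ‖B ^ k‖ := by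
        simpa only [frobenius_norm_transpose] using norm_mul_le (B ^ k)ᵀ (B ^ k)
    _ ≤ ‖B ^ k‖ := mul_le_of_le_one_left (norm_nonneg _) hk

end Frobenius

theorem lyapunov_eq_of_stein_of_cayley {R : Type*} [CommRing R] {A B P : Matrix n n R}
    (hB : B * (1 - A) = 1 + A) (hP : Bᵀ * P * B = P - 1) :
    2 • (Aᵀ * P + P * A) = -((1 - A)ᵀ * (1 - A)) := by
  have h : (1 + A)ᵀ * P * (1 + A) = (1 - A)ᵀ * (P - 1) * (1 - A) := by
    rw [← hB, ← hP, transpose_mul]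
    noncomm_ring
  simp only [transpose_add, transpose_sub, transpose_one] at h ⊢
  calc 2 • (Aᵀ * P + P * A) = (1 + Aᵀ) * P * (1 + A) - (1 - Aᵀ) * P * (1 - A) := by noncomm_ring
    _ = -((1 - Aᵀ) * (1 - A)) := by rw [h]; noncomm_ring

theorem posDef_neg_lyapunov_of_stein_of_cayley {A B P : Matrix n n ℝ} (hA : IsUnit (1 - A))
    (hB : B * (1 - A) = 1 + A) (hP : Bᵀ * P * B = P - 1) : (-(Aᵀ * P + P * A)).PosDef := by
  have hM : ((1 - A)ᵀ * (1 - A)).PosDef := by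
    simpa [conjTranspose_eq_transpose_of_trivial] using
      PosDef.conjTranspose_mul_self _ (mulVec_injective_iff_isUnit.2 hA)
  have h : (2 : ℝ) • -(Aᵀ * P + P * A) = (1 - A)ᵀ * (1 - A) := by
    rw [smul_neg, two_smul, ← two_nsmul, lyapunov_eq_of_stein_of_cayley hB hP, neg_neg]
  rw [← inv_smul_smul₀ (two_ne_zero' ℝ) (-(Aᵀ * P + P * A)), h]
  exact hM.smul (by norm_num)

theorem exists_posDef_lyapunov_of_forall_re_lt_zero {A : Matrix n n ℝ}
    (hA : ∀ μ ∈ spectrum ℂ (A.map ((↑) : ℝ → ℂ)), μ.re < 0) :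
    ∃ P : Matrix n n ℝ, P.PosDef ∧ (-(Aᵀ * P + P * A)).PosDef := by
  have hA₁ : IsUnit (1 - A) := by
    have h : IsUnit ((1 - A).map ((↑) : ℝ → ℂ)) := by
      simpa [Matrix.map_sub _ Complex.ofReal_sub] using
        spectrum.isUnit_one_sub_of_forall_re_lt_zero hA
    exact (isUnit_map_iff Complex.ofRealHom _).1 h
  set B := (1 + A) * (1 - A)⁻¹
  have hB : B * (1 - A) = 1 + A :=
    nonsing_inv_mul_cancel_right _ _ ((isUnit_iff_isUnit_det _).1 hA₁)
  have hBℂ : B.map (↑) * (1 - A.map (↑)) = 1 + A.map ((↑) : ℝ → ℂ) := by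
    simpa [map_ofReal_mul, Matrix.map_sub _ Complex.ofReal_sub,
      Matrix.map_add _ Complex.ofReal_add] using congrArg (map · ((↑) : ℝ → ℂ)) hB
  obtain ⟨P, hP, hStein⟩ := exists_posDef_stein_of_summable
    (summable_transpose_pow_mul_pow_of_forall_norm_lt_one (spectrum.norm_lt_one_of_cayley hA hBℂ))
  exact ⟨P, hP, posDef_neg_lyapunov_of_stein_of_cayley hA₁ hB hStein⟩

theorem exists_skew_sub_posDef_mul_eq_of_lyapunov {A P : Matrix n n ℝ} (hP : P.PosDef)
    (hA : (-(Aᵀ * P + P * A)).PosDef) :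
    ∃ J R : Matrix n n ℝ, Jᵀ = -J ∧ R.PosDef ∧ A = (J - R) * P := by
  set K := A * P⁻¹
  have hdet := (isUnit_iff_isUnit_det P).1 hP.isUnit
  have hPinv : (P⁻¹)ᵀ = P⁻¹ := by
    rw [← conjTranspose_eq_transpose_of_trivial, hP.inv.isHermitian.eq]
  refine ⟨(2⁻¹ : ℝ) • (K - Kᵀ), -(2⁻¹ : ℝ) • (K + Kᵀ), ?_, ?_, ?_⟩
  · rw [transpose_smul, transpose_sub, transpose_transpose, ← smul_neg, neg_sub]
  · have hcong : P⁻¹ᴴ * (-(Aᵀ * P + P * A)) * P⁻¹ = -(K + Kᵀ) := calc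
      _ = -(P⁻¹ * Aᵀ * (P * P⁻¹) + P⁻¹ * P * A * P⁻¹) := by
        rw [conjTranspose_eq_transpose_of_trivial, hPinv]
        noncomm_ring
      _ = -(K + Kᵀ) := by
        rw [mul_nonsing_inv _ hdet, nonsing_inv_mul _ hdet, transpose_mul, hPinv]
        noncomm_ring
    rw [neg_smul, ← smul_neg, ← hcong]
    exact (hA.conjTranspose_mul_mul_same
      (mulVec_injective_iff_isUnit.2 (isUnit_nonsing_inv_iff.2 hP.isUnit))).smul (by norm_num)
  · rw [neg_smul, sub_neg_eq_add, ← smul_add, sub_add_add_cancel, ← two_smul ℝ K, smul_smul,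
      inv_mul_cancel₀ two_ne_zero, one_smul, Matrix.mul_assoc,
      nonsing_inv_mul _ hdet, Matrix.mul_one]

end Matrix

/-- A real matrix `A` is Hurwitz if and only if it admits a decomposition
`A = (J - R) Q` with `J` skew-symmetric and `R`, `Q` positive definite. -/
theorem hurwitz_iff_decomposition (n : ℕ) (A : Matrix (Fin n) (Fin n) ℝ) :
    (∀ μ ∈ spectrum ℂ (A.map ((↑) : ℝ → ℂ)), μ.re < 0) ↔
    ∃ J R Q : Matrix (Fin n) (Fin n) ℝ,
      Jᵀ = -J ∧
      (Rᵀ = R ∧ ∀ v : Fin n → ℝ, v ≠ 0 → 0 < v ⬝ᵥ (R *ᵥ v)) ∧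
      (Qᵀ = Q ∧ ∀ v : Fin n → ℝ, v ≠ 0 → 0 < v ⬝ᵥ (Q *ᵥ v)) ∧
      A = (J - R) * Q := by
  simp only [← posDef_iff_transpose_eq_self_and_dotProduct_mulVec_pos]
  constructor
  · intro hA
    obtain ⟨P, hP, hLyap⟩ := exists_posDef_lyapunov_of_forall_re_lt_zero hA
    obtain ⟨J, R, hJ, hR, hAP⟩ := exists_skew_sub_posDef_mul_eq_of_lyapunov hP hLyap
    exact ⟨J, R, P, hJ, hR, hP, hAP⟩
  · rintro ⟨J, R, Q, hJ, hR, hQ, rfl⟩ μ hμ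
    refine re_lt_zero_of_mem_spectrum_skew_sub_posDef_mul (J := J.map (↑)) ?_
      hR.map_ofReal hQ.map_ofReal
      (by simpa [map_ofReal_mul, Matrix.map_sub _ Complex.ofReal_sub] using hμ)
    rw [conjTranspose_map_ofReal, hJ, Matrix.map_neg _ Complex.ofReal_neg]
end
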